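/- In the IOTA DAG model with constants b > 10·h_M − 6·h_1 + 3·M·ε_max + 2, κ_A > 1 + max{2·h_M, 3·h_M·(h_M + ε_min)/(h_M − 1)} and κ_B = κ_A + ε_min + 1: for any i and any event D_{i−1} ∈ Σ_{i−1} with D_{i−1} ⊆ {L(t_i) ≤ b} and P(D_{i−1} ∩ A_i) > 0, the conditional probability P(B_i | D_{i−1} ∩ A_i) is strictly positive, where A_i is the Step-A event and B_i is the Step-B event. -/

import Mathlib

/- ## Deterministic core of the IOTA DAG model.

Time is discrete, `t_n = n`.  A realization of the model is described by four
sequences `θ e x y : ℕ → ℕ`: vertex `n ≥ 1` arrives at time `n`, has POW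
duration `θ n`, observation delay `e n`, and parents `x n`, `y n`
(selected among the tips of the graph at time `n - e n`, truncated subtraction
encoding the convention `G(t) = G(t₀)` for `t < 0`).  The vertex `n` and the
directed edges `(n, x n)`, `(n, y n)` are added to the DAG at time `n + θ n`,
i.e. they are present in `G(m)` exactly when `n + θ n < m`. -/

namespace IotaDAG

/-- `V θ n`: set of vertices of the DAG at time `n` (completed POW). -/
def V (θ : ℕ → ℕ) (n : ℕ) : Set ℕ := {0} ∪ {k | 1 ≤ k ∧ k + θ k < n}

/-- `E θ x y n`: set of (solid) directed edges of the DAG at time `n`. -/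
def E (θ x y : ℕ → ℕ) (n : ℕ) : Set (ℕ × ℕ) :=
  {p | ∃ k, 1 ≤ k ∧ k + θ k < n ∧ (p = (k, x k) ∨ p = (k, y k))}

/-- `V' θ n`: set of arrived vertices whose POW is unfinished at time `n`. -/
def V' (θ : ℕ → ℕ) (n : ℕ) : Set ℕ := {k | 1 ≤ k ∧ k < n ∧ n ≤ k + θ k}

/-- Tips at time `n`: vertices of in-degree 0. -/
def tips (θ x y : ℕ → ℕ) (n : ℕ) : Set ℕ :=
  {v | v ∈ V θ n ∧ ∀ i, (i, v) ∉ E θ x y n}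

/-- Pending tips at time `n`: tips already selected as a parent by some arrived
vertex whose POW is unfinished. -/
def pend (θ x y : ℕ → ℕ) (n : ℕ) : Set ℕ :=
  {v | v ∈ tips θ x y n ∧ ∃ j ∈ V' θ n, x j = v ∨ y j = v}

/-- Free tips at time `n`: tips that are not pending. -/
def free (θ x y : ℕ → ℕ) (n : ℕ) : Set ℕ := tips θ x y n \ pend θ x y n

/-- `L(t_n)`: number of tips. -/
noncomputable def L (θ x y : ℕ → ℕ) (n : ℕ) : ℕ := (tips θ x y n).ncard

/-- `W(t_n)`: number of pending tips. -/
noncomputable def W (θ x y : ℕ → ℕ) (n : ℕ) : ℕ := (pend θ x y n).ncard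

/-- `F(t_n)`: number of free tips. -/
noncomputable def F (θ x y : ℕ → ℕ) (n : ℕ) : ℕ := (free θ x y n).ncard

/-- Validity of a realization: every arriving vertex selects both of its parents
among the tips of the graph observed with its delay. -/
def Valid (θ e x y : ℕ → ℕ) : Prop :=
  ∀ n, 1 ≤ n → x n ∈ tips θ x y (n - e n) ∧ y n ∈ tips θ x y (n - e n)

/-- Directed edge relation of the limiting graph `⋃ₜ G(t)`. -/
def edgeRel (x y : ℕ → ℕ) (a b : ℕ) : Prop := 1 ≤ a ∧ (x a = b ∨ y a = b)

/-- `Reach x y w u`: `u` is reachable from `w`, i.e. there is a directed path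
from `w` to `u` in the limiting graph `⋃ₜ G(t)`. -/
def Reach (x y : ℕ → ℕ) (w u : ℕ) : Prop := Relation.ReflTransGen (edgeRel x y) w u

end IotaDAG
namespace IotaDAG

/- ## The bottleneck construction (Steps A, B, C). -/

/-- Step-A (tidying) event for a realization: every vertex `j` arriving at a time in
`[i, i + κA)` has delay `εmin`, POW duration `hM`, selects a single parent
(`x j = y j`) which lies outside the current free tips whenever possible. -/
def StepA (θ e x y : ℕ → ℕ) (hM εmin κA i : ℕ) : Prop :=
  ∀ j, 1 ≤ j → i ≤ j → j < i + κA →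
    e j = εmin ∧ θ j = hM ∧ x j = y j ∧
    (¬ tips θ x y (j - εmin) ⊆ free θ x y j →
        x j ∈ tips θ x y (j - εmin) \ free θ x y j) ∧
    (tips θ x y (j - εmin) ⊆ free θ x y j → x j ∈ tips θ x y (j - εmin))

/-- `FB`: the set consisting of the `2 (hM + εmin)` smallest elements of the set of
free tips at time `i + κA`. -/
def FB (θ x y : ℕ → ℕ) (hM εmin κA i : ℕ) : Set ℕ :=
  {v | v ∈ free θ x y (i + κA) ∧
        (free θ x y (i + κA) ∩ Set.Iic v).ncard ≤ 2 * (hM + εmin)}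

/-- Step-B (preparation) event: every vertex `j` arriving at a time in
`[i + κA, i + κB)` has POW duration `hM`, delay `εmin`, and selects a single parent
among the tips it observes, avoiding the reserved set `FB`. -/
def StepB (θ e x y : ℕ → ℕ) (hM εmin κA κB i : ℕ) : Prop :=
  ∀ j, 1 ≤ j → i + κA ≤ j → j < i + κB →
    θ j = hM ∧ e j = εmin ∧ x j = y j ∧
    x j ∈ tips θ x y (j - εmin) \ FB θ x y hM εmin κA i

/-- `c_i := F(t_i + κB) + |V'(t_i + κB)|`. -/
noncomputable def ci (θ x y : ℕ → ℕ) (κB i : ℕ) : ℕ :=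
  F θ x y (i + κB) + (V' θ (i + κB)).ncard

/-- The labelling `ξ (i, j, k)` of the interchange structure: for `j = 1` it is the
`k`-th smallest element of `F(t_i + κB) ∪ V'(t_i + κB)` (1-indexed), and for `j ≥ 2`
it is the vertex arriving at time `i + κB - 1 + (j - 2) * c_i + k`. -/
noncomputable def ξ (θ x y : ℕ → ℕ) (κB i j k : ℕ) : ℕ :=
  if j ≤ 1 then Nat.nth (fun v => v ∈ free θ x y (i + κB) ∪ V' θ (i + κB)) (k - 1)
  else i + κB - 1 + (j - 2) * ci θ x y κB i + k

/-- Step-C (interchange) event: every vertex `v` arriving at a time in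
`[i + κB, i + κC]`, with additional label `(i, j, k)` where
`j = 2 + (v - (i + κB)) / c_i` and `k = (v - (i + κB)) % c_i + 1`, has POW duration
`hM`, delay `εmin`, and parents `x v = ξ (i, j-1, max 1 (k-1))`,
`y v = ξ (i, j-1, min (k+1) c_i)`. -/
noncomputable def StepC (θ e x y : ℕ → ℕ) (hM εmin κB κC i : ℕ) : Prop :=
  ∀ v, 1 ≤ v → i + κB ≤ v → v ≤ i + κC →
    θ v = hM ∧ e v = εmin ∧
    x v = ξ θ x y κB i (1 + (v - (i + κB)) / ci θ x y κB i)
            (max 1 ((v - (i + κB)) % ci θ x y κB i)) ∧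
    y v = ξ θ x y κB i (1 + (v - (i + κB)) / ci θ x y κB i)
            (min ((v - (i + κB)) % ci θ x y κB i + 2) (ci θ x y κB i))

end IotaDAG
namespace IotaDAG

/-- `Σ_i`: the σ-algebra generated by the random variables
`Θ_k, ε_k, X_k, Y_k` for `k = 1, …, i`. -/
def sigAlg {Ω : Type*} (Θ ε X Y : ℕ → Ω → ℕ) (i : ℕ) : MeasurableSpace Ω :=
  ⨆ k ∈ Finset.Icc 1 i,
    (MeasurableSpace.comap (Θ k) ⊤ ⊔ MeasurableSpace.comap (ε k) ⊤ ⊔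
      MeasurableSpace.comap (X k) ⊤ ⊔ MeasurableSpace.comap (Y k) ⊤)

end IotaDAG

open MeasureTheory ProbabilityTheory IotaDAG
open scoped Classical

/-!
Under Step A every vertex arriving in `[i, i + κA)` has POW duration `hM`, and it selects a
non-free tip whenever it observes one. Let `v` be such a vertex that is no longer a tip at time
`n ≤ i + κA`. Its earliest picker selects it while it is still free, so no other earliest picker
can arrive less than `hM + εmin` later: it would observe `v` as a non-free tip and would
therefore have to pick a non-free tip itself. The earliest pickers are thus spread out, few
vertices of `(i, n - hM)` die, and at every time of `[i + κA - εmin, i + κA]` there are more than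
`2 (hM + εmin) ≥ |F_i^B|` tips. Every Step-B vertex therefore observes a tip outside `F_i^B`; this
tip is `Σ_{j-1}`-measurable information and the law of the parents charges it with positive
mass, so an induction over the `εmin + 1` Step-B vertices keeps the probability positive.
-/

theorem Finset.card_le_div_add_one_of_spaced {K : Finset ℕ} {lo hi g : ℕ} (hg : 0 < g)
    (hK : K ⊆ Finset.Icc lo hi) (hspaced : ∀ a ∈ K, ∀ b ∈ K, a < b → a + g ≤ b) :
    K.card ≤ (hi - lo) / g + 1 := by
  have hmono : ∀ a ∈ K, ∀ b ∈ K, a < b → (a - lo) / g < (b - lo) / g := by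
    intro a ha b hb hab
    have hlo := (Finset.mem_Icc.1 (hK ha)).1
    calc (a - lo) / g < (a - lo) / g + 1 := Nat.lt_succ_self _
      _ = (a - lo + g) / g := (Nat.add_div_right _ hg).symm
      _ ≤ (b - lo) / g := Nat.div_le_div_right (by have := hspaced a ha b hb hab; omega)
  calc K.card ≤ (Finset.range ((hi - lo) / g + 1)).card := by
        refine Finset.card_le_card_of_injOn (fun s => (s - lo) / g) (fun s hs => ?_) ?_
        · have := (Finset.mem_Icc.1 (hK hs)).2
          simp only [Finset.coe_range, Set.mem_Iio]
          exact Nat.lt_succ_of_le (Nat.div_le_div_right (by omega))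
        · intro a ha b hb hab
          rcases lt_trichotomy a b with h | h | h
          · exact absurd hab (hmono a ha b hb h).ne
          · exact h
          · exact absurd hab (hmono b hb a ha h).ne'
    _ = (hi - lo) / g + 1 := Finset.card_range _

theorem Set.ncard_setOf_ncard_inter_Iic_le {α : Type*} [LinearOrder α] {S : Set α}
    (hS : S.Finite) (m : ℕ) : {v | v ∈ S ∧ (S ∩ Set.Iic v).ncard ≤ m}.ncard ≤ m := by
  have hmono : StrictMonoOn (fun v => (S ∩ Set.Iic v).ncard) S := fun a _ b hb hab =>
    Set.ncard_lt_ncard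
      ((Set.inter_subset_inter_right _ (Set.Iic_subset_Iic.2 hab.le)).ssubset_of_not_subset
        fun hsub => (hsub ⟨hb, le_rfl⟩).2.not_gt hab) (hS.inter_of_left _)
  calc _ ≤ (Set.Icc 1 m).ncard :=
        Set.ncard_le_ncard_of_injOn (fun v => (S ∩ Set.Iic v).ncard)
          (fun v hv => ⟨(Set.ncard_pos (hS.inter_of_left _)).2 ⟨v, hv.1, le_rfl⟩, hv.2⟩)
          (hmono.injOn.mono fun v hv => hv.1) (Set.finite_Icc _ _)
    _ = m := by simp

namespace MeasureTheory

variable {Ω : Type*} [MeasurableSpace Ω] {μ : Measure Ω}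

theorem exists_measure_inter_ne_zero_of_ae_cover {ι : Type*} [Countable ι] {S : Set Ω}
    {T : ι → Set Ω} (hS : μ S ≠ 0) (hcover : ∀ᵐ ω ∂μ, ω ∈ S → ∃ v, ω ∈ T v) :
    ∃ v, μ (S ∩ T v) ≠ 0 := by
  by_contra! hnull
  refine hS (measure_mono_null_ae ?_ (measure_iUnion_null hnull))
  filter_upwards [hcover] with ω hω hωS
  obtain ⟨v, hv⟩ := hω hωS
  exact Set.mem_iUnion.2 ⟨v, hωS, hv⟩

theorem measure_inter_pos_of_toReal_eq_setIntegral {D E : Set Ω} {g : Ω → ℝ}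
    (hD : MeasurableSet D) (hDpos : μ D ≠ 0) (hg : IntegrableOn g D μ)
    (hgpos : ∀ ω ∈ D, 0 < g ω) (heq : (μ (D ∩ E)).toReal = ∫ ω in D, g ω ∂μ) :
    0 < μ (D ∩ E) := by
  have hint : 0 < ∫ ω in D, g ω ∂μ := by
    rw [setIntegral_pos_iff_support_of_nonneg_ae
      (ae_restrict_of_forall_mem hD fun ω hω => (hgpos ω hω).le) hg,
      Set.inter_eq_right.2 fun ω hω => Function.mem_support.2 (hgpos ω hω).ne']
    exact pos_iff_ne_zero.2 hDpos
  rw [← heq] at hint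
  exact (ENNReal.toReal_pos_iff.1 hint).1

end MeasureTheory

namespace IotaDAG

section Locality

variable {θ θ' e e' x x' y y' : ℕ → ℕ} {n : ℕ}

theorem mk_mem_E_iff {k v : ℕ} : (k, v) ∈ E θ x y n ↔ edgeRel x y k v ∧ k + θ k < n := by
  simp only [E, edgeRel, Set.mem_ofPred_eq, Prod.ext_iff]
  constructor
  · rintro ⟨k, hk, hkn, ⟨rfl, rfl⟩ | ⟨rfl, rfl⟩⟩ <;> simp_all
  · rintro ⟨⟨hk, rfl | rfl⟩, hkn⟩ <;> exact ⟨k, hk, hkn, by simp⟩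

theorem V_congr (hθ : Set.EqOn θ θ' (Set.Ico 1 n)) : V θ n = V θ' n := by
  ext v
  simp only [V, Set.mem_union, Set.mem_ofPred_eq]
  refine or_congr_right (and_congr_right fun hv => ?_)
  constructor <;> intro hvn
  · rwa [← hθ ⟨hv, by omega⟩]
  · rwa [hθ ⟨hv, by omega⟩]

theorem E_congr (hθ : Set.EqOn θ θ' (Set.Ico 1 n)) (hx : Set.EqOn x x' (Set.Ico 1 n))
    (hy : Set.EqOn y y' (Set.Ico 1 n)) : E θ x y n = E θ' x' y' n := by
  ext ⟨k, v⟩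
  simp only [mk_mem_E_iff, edgeRel]
  constructor
  · rintro ⟨⟨hk, hsel⟩, hkn⟩
    have hmem : k ∈ Set.Ico 1 n := ⟨hk, by omega⟩
    rw [← hx hmem, ← hy hmem, ← hθ hmem]
    exact ⟨⟨hk, hsel⟩, hkn⟩
  · rintro ⟨⟨hk, hsel⟩, hkn⟩
    have hmem : k ∈ Set.Ico 1 n := ⟨hk, by omega⟩
    rw [hx hmem, hy hmem, hθ hmem]
    exact ⟨⟨hk, hsel⟩, hkn⟩

theorem tips_congr (hθ : Set.EqOn θ θ' (Set.Ico 1 n)) (hx : Set.EqOn x x' (Set.Ico 1 n))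
    (hy : Set.EqOn y y' (Set.Ico 1 n)) : tips θ x y n = tips θ' x' y' n := by
  simp only [tips, V_congr hθ, E_congr hθ hx hy]

theorem V'_congr (hθ : Set.EqOn θ θ' (Set.Ico 1 n)) : V' θ n = V' θ' n := by
  ext k
  simp only [V', Set.mem_ofPred_eq]
  constructor <;> rintro ⟨hk, hkn, hθk⟩
  · exact ⟨hk, hkn, by rwa [← hθ ⟨hk, hkn⟩]⟩
  · exact ⟨hk, hkn, by rwa [hθ ⟨hk, hkn⟩]⟩

theorem free_congr (hθ : Set.EqOn θ θ' (Set.Ico 1 n)) (hx : Set.EqOn x x' (Set.Ico 1 n))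
    (hy : Set.EqOn y y' (Set.Ico 1 n)) : free θ x y n = free θ' x' y' n := by
  have hpend : pend θ x y n = pend θ' x' y' n := by
    ext v
    simp only [pend, tips_congr hθ hx hy, V'_congr hθ, Set.mem_ofPred_eq]
    refine and_congr_right fun _ => exists_congr fun j => and_congr_right fun hj => ?_
    rw [hx ⟨hj.1, hj.2.1⟩, hy ⟨hj.1, hj.2.1⟩]
  simp only [free, tips_congr hθ hx hy, hpend]

theorem FB_congr {hM em κA i : ℕ} (hθ : Set.EqOn θ θ' (Set.Ico 1 (i + κA)))
    (hx : Set.EqOn x x' (Set.Ico 1 (i + κA))) (hy : Set.EqOn y y' (Set.Ico 1 (i + κA))) :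
    FB θ x y hM em κA i = FB θ' x' y' hM em κA i := by
  simp only [FB, free_congr hθ hx hy]

theorem stepA_congr {hM em κA i : ℕ} (hθ : Set.EqOn θ θ' (Set.Ico 1 (i + κA)))
    (he : Set.EqOn e e' (Set.Ico 1 (i + κA))) (hx : Set.EqOn x x' (Set.Ico 1 (i + κA)))
    (hy : Set.EqOn y y' (Set.Ico 1 (i + κA))) :
    StepA θ e x y hM em κA i ↔ StepA θ' e' x' y' hM em κA i := by
  refine forall_congr' fun j => imp_congr_right fun hj1 => imp_congr_right fun _ =>
    imp_congr_right fun hj => ?_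
  have hsub : ∀ m ≤ j, Set.Ico 1 m ⊆ Set.Ico 1 (i + κA) :=
    fun m hm => Set.Ico_subset_Ico_right (by omega)
  have hj : j ∈ Set.Ico 1 (i + κA) := ⟨hj1, hj⟩
  rw [he hj, hθ hj, hx hj, hy hj,
    tips_congr (hθ.mono (hsub _ (Nat.sub_le j em))) (hx.mono (hsub _ (Nat.sub_le j em)))
      (hy.mono (hsub _ (Nat.sub_le j em))),
    free_congr (hθ.mono (hsub j le_rfl)) (hx.mono (hsub j le_rfl)) (hy.mono (hsub j le_rfl))]

theorem stepB_congr {hM em κA κB i : ℕ} (hθ : Set.EqOn θ θ' (Set.Ico 1 (i + κB)))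
    (he : Set.EqOn e e' (Set.Ico 1 (i + κB))) (hx : Set.EqOn x x' (Set.Ico 1 (i + κB)))
    (hy : Set.EqOn y y' (Set.Ico 1 (i + κB))) :
    StepB θ e x y hM em κA κB i ↔ StepB θ' e' x' y' hM em κA κB i := by
  refine forall_congr' fun j => imp_congr_right fun hj1 => imp_congr_right fun hij =>
    imp_congr_right fun hj => ?_
  have hsub : ∀ m ≤ j, Set.Ico 1 m ⊆ Set.Ico 1 (i + κB) :=
    fun m hm => Set.Ico_subset_Ico_right (by omega)
  have hj : j ∈ Set.Ico 1 (i + κB) := ⟨hj1, hj⟩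
  rw [he hj, hθ hj, hx hj, hy hj,
    tips_congr (hθ.mono (hsub _ (Nat.sub_le j em))) (hx.mono (hsub _ (Nat.sub_le j em)))
      (hy.mono (hsub _ (Nat.sub_le j em))),
    FB_congr (hθ.mono (hsub _ hij)) (hx.mono (hsub _ hij)) (hy.mono (hsub _ hij))]

end Locality

section Tips

variable {θ e x y : ℕ → ℕ} {n k v : ℕ}

theorem mem_tips_iff :
    v ∈ tips θ x y n ↔ v ∈ V θ n ∧ ∀ k, edgeRel x y k v → n ≤ k + θ k := by
  simp only [tips, Set.mem_ofPred_eq]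
  refine and_congr_right fun _ => forall_congr' fun k => ?_
  rw [mk_mem_E_iff, not_and, not_lt]

theorem tips_subset_Iic : tips θ x y n ⊆ Set.Iic n := by
  rintro v ⟨rfl | ⟨-, hv⟩, -⟩
  · exact Nat.zero_le n
  · exact Set.mem_Iic.2 (by omega)

theorem tips_finite : (tips θ x y n).Finite :=
  (Set.finite_Iic n).subset tips_subset_Iic

theorem notMem_free_of_edgeRel (hkv : edgeRel x y k v) (hkn : k < n) :
    v ∉ free θ x y n := by
  rintro ⟨hv, hnp⟩
  by_cases hθk : n ≤ k + θ k
  · exact hnp ⟨hv, k, ⟨hkv.1, hkn, hθk⟩, hkv.2⟩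
  · exact absurd ((mem_tips_iff.1 hv).2 k hkv) hθk

theorem mem_free_of_forall_not_edgeRel (hv : v ∈ tips θ x y n)
    (hnone : ∀ k < n, ¬ edgeRel x y k v) : v ∈ free θ x y n :=
  ⟨hv, fun ⟨_, j, hj, hjv⟩ => hnone j hj.2.1 ⟨hj.1, hjv⟩⟩

theorem one_le_L_of_mem_tips (hv : v ∈ tips θ x y n) : 1 ≤ L θ x y n :=
  (Set.ncard_pos tips_finite).2 ⟨v, hv⟩

theorem add_lt_of_edgeRel {em : ℕ} (hval : Valid θ e x y) (he : ∀ k, 1 ≤ k → em ≤ e k)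
    (hv : 1 ≤ v) (hkv : edgeRel x y k v) : v + θ v + em < k := by
  have hvt : v ∈ tips θ x y (k - e k) := by
    rcases hkv with ⟨hk, rfl | rfl⟩
    exacts [(hval k hk).1, (hval k hk).2]
  rcases hvt.1 with rfl | ⟨-, hlt⟩
  · exact absurd hv (by decide)
  · have := he k hkv.1
    omega

end Tips

/-- Junk value `0` when `v` is never selected as a parent. -/
noncomputable def firstPicker (x y : ℕ → ℕ) (v : ℕ) : ℕ := sInf {k | edgeRel x y k v}

section FirstPicker

variable {x y : ℕ → ℕ} {k v : ℕ}

theorem edgeRel_firstPicker (hkv : edgeRel x y k v) : edgeRel x y (firstPicker x y v) v :=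
  Nat.sInf_mem (s := {k | edgeRel x y k v}) ⟨k, hkv⟩

theorem firstPicker_le (hkv : edgeRel x y k v) : firstPicker x y v ≤ k :=
  Nat.sInf_le hkv

theorem not_edgeRel_of_lt_firstPicker (hk : k < firstPicker x y v) : ¬ edgeRel x y k v :=
  Nat.notMem_of_lt_sInf hk

theorem mem_free_firstPicker {θ : ℕ → ℕ} (hv : v ∈ tips θ x y (firstPicker x y v)) :
    v ∈ free θ x y (firstPicker x y v) :=
  mem_free_of_forall_not_edgeRel hv fun _ => not_edgeRel_of_lt_firstPicker

end FirstPicker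

section Bottleneck

variable {θ e x y : ℕ → ℕ} {hM em κA i n m k v w : ℕ}

theorem theta_eq_of_stepA (hA : StepA θ e x y hM em κA i) (hik : i < k) (hk : k < i + κA) :
    θ k = hM :=
  (hA k (by omega) hik.le hk).2.1

theorem x_eq_of_stepA (hA : StepA θ e x y hM em κA i) (hkv : edgeRel x y k v)
    (hik : i ≤ k) (hk : k < i + κA) : x k = v := by
  obtain ⟨-, -, hxy, -⟩ := hA k hkv.1 hik hk
  rcases hkv.2 with h | h
  exacts [h, hxy.trans h]

variable (hval : Valid θ e x y) (he : ∀ k, 1 ≤ k → em ≤ e k)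
  (hθ : ∀ k, i < k → k < i + κA → θ k = hM)

include hval he hθ in
theorem firstPicker_add_lt (hiv : i < v) (hvn : v + hM < n) (hn : n ≤ i + κA)
    (hnt : v ∉ tips θ x y n) :
    edgeRel x y (firstPicker x y v) v ∧ firstPicker x y v + hM < n := by
  have hθv := hθ v hiv (by omega)
  have hvV : v ∈ V θ n := Or.inr ⟨by omega, by omega⟩
  obtain ⟨k, hkv, hkn⟩ : ∃ k, edgeRel x y k v ∧ k + θ k < n := by
    by_contra! hall
    exact hnt (mem_tips_iff.2 ⟨hvV, hall⟩)
  have hvk := add_lt_of_edgeRel hval he (by omega) hkv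
  have hθk := hθ k (by omega) (by omega)
  exact ⟨edgeRel_firstPicker hkv, by have := firstPicker_le hkv; omega⟩

include hval he hθ in
theorem mem_tips_of_le_firstPicker_add (hiv : i < v) (hvm : v + hM < m)
    (hm : m ≤ firstPicker x y v + hM) (hmκ : m ≤ i + κA) : v ∈ tips θ x y m := by
  have hθv := hθ v hiv (by omega)
  refine mem_tips_iff.2 ⟨Or.inr ⟨by omega, by omega⟩, fun k hkv => ?_⟩
  by_contra! hkm
  have hvk := add_lt_of_edgeRel hval he (by omega) hkv
  have hθk := hθ k (by omega) (by omega)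
  have := firstPicker_le hkv
  omega

include hval he in
theorem firstPicker_add_lt_firstPicker (hA : StepA θ e x y hM em κA i) (hiv : i < v)
    (hiw : i < w) (hvn : v + hM < n) (hwn : w + hM < n) (hn : n ≤ i + κA)
    (hvt : v ∉ tips θ x y n) (hwt : w ∉ tips θ x y n)
    (hvw : firstPicker x y v < firstPicker x y w) :
    firstPicker x y v + hM + em < firstPicker x y w := by
  have hθ : ∀ k, i < k → k < i + κA → θ k = hM := fun k => theta_eq_of_stepA hA
  set a := firstPicker x y v
  set b := firstPicker x y w
  obtain ⟨hav, han⟩ := firstPicker_add_lt hval he hθ hiv hvn hn hvt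
  obtain ⟨hbw, hbn⟩ := firstPicker_add_lt hval he hθ hiw hwn hn hwt
  have hva := add_lt_of_edgeRel hval he (by omega) hav
  have hwb := add_lt_of_edgeRel hval he (by omega) hbw
  rw [hθ v hiv (by omega)] at hva
  rw [hθ w hiw (by omega)] at hwb
  by_contra! hba
  have hv_tip : v ∈ tips θ x y (b - em) :=
    mem_tips_of_le_firstPicker_add hval he hθ hiv (by omega) (by omega) (by omega)
  have hw_free : w ∈ free θ x y b :=
    mem_free_firstPicker
      (mem_tips_of_le_firstPicker_add hval he hθ hiw (by omega) (by omega) (by omega))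
  have hnot_sub : ¬ tips θ x y (b - em) ⊆ free θ x y b :=
    fun hsub => notMem_free_of_edgeRel hav hvw (hsub hv_tip)
  have hxb := ((hA b hbw.1 (by omega) (by omega)).2.2.2.1 hnot_sub).2
  rw [x_eq_of_stepA hA hbw (by omega) (by omega)] at hxb
  exact hxb hw_free

include hval he in
theorem card_filter_notMem_tips_le (hA : StepA θ e x y hM em κA i) (hnκ : n ≤ i + κA) :
    ((Finset.Icc (i + 1) (n - hM - 1)).filter (· ∉ tips θ x y n)).card ≤
      (n - hM - 1 - (i + hM + em + 2)) / (hM + em + 1) + 1 := by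
  have hθ : ∀ k, i < k → k < i + κA → θ k = hM := fun k => theta_eq_of_stepA hA
  set dead := (Finset.Icc (i + 1) (n - hM - 1)).filter (· ∉ tips θ x y n)
  have hmem : ∀ v ∈ dead, i < v ∧ v + hM < n ∧ v ∉ tips θ x y n := fun v hv => by
    obtain ⟨hvT, hvt⟩ := Finset.mem_filter.1 hv
    have := Finset.mem_Icc.1 hvT
    exact ⟨by omega, by omega, hvt⟩
  have hinj : Set.InjOn (firstPicker x y) dead := by
    intro v hv w hw hvw
    obtain ⟨hiv, hvn, hvt⟩ := hmem v hv
    obtain ⟨hiw, hwn, hwt⟩ := hmem w hw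
    obtain ⟨hav, han⟩ := firstPicker_add_lt hval he hθ hiv hvn hnκ hvt
    obtain ⟨hbw, hbn⟩ := firstPicker_add_lt hval he hθ hiw hwn hnκ hwt
    have hva := add_lt_of_edgeRel hval he (by omega) hav
    rw [← x_eq_of_stepA hA hav (by omega) (by omega),
      ← x_eq_of_stepA hA hbw (by omega) (by omega), hvw]
  rw [← Finset.card_image_of_injOn hinj]
  refine Finset.card_le_div_add_one_of_spaced (by omega) (fun k hk => ?_) ?_
  · obtain ⟨v, hv, rfl⟩ := Finset.mem_image.1 hk
    obtain ⟨hiv, hvn, hvt⟩ := hmem v hv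
    obtain ⟨hav, han⟩ := firstPicker_add_lt hval he hθ hiv hvn hnκ hvt
    have hva := add_lt_of_edgeRel hval he (by omega) hav
    rw [hθ v hiv (by omega)] at hva
    exact Finset.mem_Icc.2 ⟨by omega, by omega⟩
  · simp only [Finset.mem_image]
    rintro _ ⟨v, hv, rfl⟩ _ ⟨w, hw, rfl⟩ hvw
    obtain ⟨hiv, hvn, hvt⟩ := hmem v hv
    obtain ⟨hiw, hwn, hwt⟩ := hmem w hw
    have := firstPicker_add_lt_firstPicker hval he hA hiv hiw hvn hwn hnκ hvt hwt hvw
    omega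

include hval he in
theorem two_mul_lt_ncard_tips (hA : StepA θ e x y hM em κA i) (hhM : 1 ≤ hM)
    (hn : i + 3 * hM + 2 * em + 5 ≤ n) (hnκ : n ≤ i + κA) :
    2 * (hM + em) < (tips θ x y n).ncard := by
  have hdead := card_filter_notMem_tips_le hval he hA hnκ
  set T := Finset.Icc (i + 1) (n - hM - 1)
  have hq : (n - hM - 1 - (i + hM + em + 2)) / (hM + em + 1) <
      n - 2 * (hM + em + 1) - hM - 1 - i := by
    rw [Nat.div_lt_iff_lt_mul (by omega)]
    obtain ⟨d, rfl⟩ : ∃ d, n = i + 3 * hM + 2 * em + 5 + d :=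
      ⟨n - (i + 3 * hM + 2 * em + 5), by omega⟩
    have e1 : i + 3 * hM + 2 * em + 5 + d - hM - 1 - (i + hM + em + 2) = hM + em + 2 + d := by
      omega
    have e2 : i + 3 * hM + 2 * em + 5 + d - 2 * (hM + em + 1) - hM - 1 - i = d + 2 := by omega
    rw [e1, e2]
    nlinarith
  have hsplit : (T.filter (· ∈ tips θ x y n)).card + (T.filter (· ∉ tips θ x y n)).card =
      T.card := Finset.card_filter_add_card_filter_not _
  have hsurv : (T.filter (· ∈ tips θ x y n)).card ≤ (tips θ x y n).ncard := by
    rw [← Set.ncard_coe_finset]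
    exact Set.ncard_le_ncard (fun v hv => (Finset.mem_filter.1 hv).2) tips_finite
  have hT : T.card = n - hM - 1 - i := by simp only [T, Nat.card_Icc]; omega
  omega

include hval he in
theorem exists_mem_tips_notMem_FB (hA : StepA θ e x y hM em κA i) (hhM : 1 ≤ hM)
    (hκA : 3 * hM + 3 * em + 5 ≤ κA) (hn : i + κA ≤ n + em) (hnκ : n ≤ i + κA) :
    ∃ v ∈ tips θ x y n, v ∉ FB θ x y hM em κA i := by
  by_contra! hsub
  have hFB : (FB θ x y hM em κA i).ncard ≤ 2 * (hM + em) :=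
    Set.ncard_setOf_ncard_inter_Iic_le (tips_finite.subset Set.sdiff_subset) _
  have := Set.ncard_le_ncard hsub ((tips_finite.subset Set.sdiff_subset).subset fun v hv => hv.1)
  have := two_mul_lt_ncard_tips hval he hA hhM (by omega) hnκ
  omega

end Bottleneck

theorem stepB_add_one {θ e x y : ℕ → ℕ} {hM em κA i l : ℕ}
    (hB : StepB θ e x y hM em κA (κA + l) i)
    (hnext : θ (i + κA + l) = hM ∧ e (i + κA + l) = em ∧ x (i + κA + l) = y (i + κA + l) ∧
      x (i + κA + l) ∈ tips θ x y (i + κA + l - em) \ FB θ x y hM em κA i) :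
    StepB θ e x y hM em κA (κA + (l + 1)) i := by
  intro j hj1 hij hj
  obtain hjl | rfl : j < i + κA + l ∨ j = i + κA + l := by omega
  · exact hB j hj1 hij (by omega)
  · exact hnext

section Measurability

variable {Ω : Type*} (Θ ε X Y : ℕ → Ω → ℕ)

theorem sigAlg_mono {a b : ℕ} (hab : a ≤ b) : sigAlg Θ ε X Y a ≤ sigAlg Θ ε X Y b :=
  biSup_mono fun k hk => by simp only [Finset.mem_Icc] at hk ⊢; omega

theorem sigAlg_le [mΩ : MeasurableSpace Ω] {Θ ε X Y : ℕ → Ω → ℕ} (hΘ : ∀ k, Measurable (Θ k))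
    (hε : ∀ k, Measurable (ε k)) (hX : ∀ k, Measurable (X k)) (hY : ∀ k, Measurable (Y k))
    (n : ℕ) : sigAlg Θ ε X Y n ≤ mΩ :=
  iSup₂_le fun k _ =>
    sup_le (sup_le (sup_le (hΘ k).comap_le (hε k).comap_le) (hX k).comap_le) (hY k).comap_le

theorem measurable_trajectory (n : ℕ) :
    Measurable[sigAlg Θ ε X Y n] fun ω (k : Finset.Icc 1 n) => (Θ k ω, ε k ω, X k ω, Y k ω) := by
  refine @measurable_pi_lambda _ _ _ (sigAlg Θ ε X Y n) _ _ fun k => ?_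
  have hle : MeasurableSpace.comap (Θ k) ⊤ ⊔ MeasurableSpace.comap (ε k) ⊤ ⊔
      MeasurableSpace.comap (X k) ⊤ ⊔ MeasurableSpace.comap (Y k) ⊤ ≤ sigAlg Θ ε X Y n :=
    le_iSup₂_of_le (k : ℕ) k.2 le_rfl
  exact (Measurable.of_comap_le (le_sup_left.trans (le_sup_left.trans (le_sup_left.trans hle))))
    |>.prodMk <| (Measurable.of_comap_le (le_sup_right.trans (le_sup_left.trans (le_sup_left.trans
      hle)))).prodMk <| (Measurable.of_comap_le (le_sup_right.trans (le_sup_left.trans hle))).prodMk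
      (Measurable.of_comap_le (le_sup_right.trans hle))

theorem measurableSet_sigAlg_of_eqOn {n : ℕ} {S : Set Ω}
    (hS : ∀ ω ω', Set.EqOn (Θ · ω) (Θ · ω') (Set.Ico 1 n) →
      Set.EqOn (ε · ω) (ε · ω') (Set.Ico 1 n) → Set.EqOn (X · ω) (X · ω') (Set.Ico 1 n) →
      Set.EqOn (Y · ω) (Y · ω') (Set.Ico 1 n) → ω ∈ S → ω' ∈ S) :
    MeasurableSet[sigAlg Θ ε X Y (n - 1)] S := by
  set f := fun ω (k : Finset.Icc 1 (n - 1)) => (Θ k ω, ε k ω, X k ω, Y k ω)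
  have hsat : f ⁻¹' (f '' S) = S := by
    refine subset_antisymm ?_ (Set.subset_preimage_image f S)
    rintro ω' ⟨ω, hω, hf⟩
    have hk : ∀ k ∈ Set.Ico 1 n,
        (Θ k ω, ε k ω, X k ω, Y k ω) = (Θ k ω', ε k ω', X k ω', Y k ω') :=
      fun k hk => congrFun hf ⟨k, Finset.mem_Icc.2 ⟨hk.1, Nat.le_sub_one_of_lt hk.2⟩⟩
    exact hS ω ω' (fun k hk' => congrArg Prod.fst (hk k hk'))
      (fun k hk' => congrArg (·.2.1) (hk k hk')) (fun k hk' => congrArg (·.2.2.1) (hk k hk'))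
      (fun k hk' => congrArg (·.2.2.2) (hk k hk')) hω
  rw [← hsat]
  exact measurable_trajectory Θ ε X Y (n - 1) MeasurableSet.of_discrete

theorem measurable_sigAlg_of_eqOn {β : Type*} [MeasurableSpace β] {n : ℕ} {g : Ω → β}
    (hg : ∀ ω ω', Set.EqOn (Θ · ω) (Θ · ω') (Set.Ico 1 n) →
      Set.EqOn (ε · ω) (ε · ω') (Set.Ico 1 n) → Set.EqOn (X · ω) (X · ω') (Set.Ico 1 n) →
      Set.EqOn (Y · ω) (Y · ω') (Set.Ico 1 n) → g ω = g ω') :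
    Measurable[sigAlg Θ ε X Y (n - 1)] g := fun _ _ =>
  measurableSet_sigAlg_of_eqOn Θ ε X Y fun ω ω' hΘ hε hX hY hω => by
    rwa [Set.mem_preimage, ← hg ω ω' hΘ hε hX hY]

variable {hM em κA κB i : ℕ}

theorem measurableSet_stepA :
    MeasurableSet[sigAlg Θ ε X Y (i + κA - 1)]
      {ω | StepA (Θ · ω) (ε · ω) (X · ω) (Y · ω) hM em κA i} :=
  measurableSet_sigAlg_of_eqOn Θ ε X Y fun _ _ hΘ hε hX hY => (stepA_congr hΘ hε hX hY).1

theorem measurableSet_stepB :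
    MeasurableSet[sigAlg Θ ε X Y (i + κB - 1)]
      {ω | StepB (Θ · ω) (ε · ω) (X · ω) (Y · ω) hM em κA κB i} :=
  measurableSet_sigAlg_of_eqOn Θ ε X Y fun _ _ hΘ hε hX hY => (stepB_congr hΘ hε hX hY).1

theorem measurableSet_mem_tips_diff_FB {n m v : ℕ} (hm : m ≤ n) (hκA : i + κA ≤ n) :
    MeasurableSet[sigAlg Θ ε X Y (n - 1)]
      {ω | v ∈ tips (Θ · ω) (X · ω) (Y · ω) m \ FB (Θ · ω) (X · ω) (Y · ω) hM em κA i} := by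
  refine measurableSet_sigAlg_of_eqOn Θ ε X Y fun ω ω' hΘ _ hX hY hω => ?_
  have hm' : Set.Ico 1 m ⊆ Set.Ico 1 n := Set.Ico_subset_Ico_right hm
  have hκA' : Set.Ico 1 (i + κA) ⊆ Set.Ico 1 n := Set.Ico_subset_Ico_right hκA
  rwa [Set.mem_ofPred_eq, ← tips_congr (hΘ.mono hm') (hX.mono hm') (hY.mono hm'),
    ← FB_congr (hΘ.mono hκA') (hX.mono hκA') (hY.mono hκA')]

end Measurability

/-- The integrand of the conditional law of `(X_n, Y_n) = (v, v')`: uniform choice among the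
tips of `G(n)`, weighted by `c = P(Θ_n = h_k) P(ε_n = j)`. -/
noncomputable def parentDensity {Ω : Type*} (Θ X Y : ℕ → Ω → ℕ) (c : ℝ) (n v v' : ℕ)
    (ω : Ω) : ℝ :=
  if v ∈ tips (Θ · ω) (X · ω) (Y · ω) n ∧ v' ∈ tips (Θ · ω) (X · ω) (Y · ω) n
  then c / (L (Θ · ω) (X · ω) (Y · ω) n : ℝ) ^ 2 else 0

section ParentDensity

variable {Ω : Type*} {Θ ε X Y : ℕ → Ω → ℕ} {c : ℝ} {n v v' : ℕ} {ω : Ω}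

theorem parentDensity_pos (hc : 0 < c) (hv : v ∈ tips (Θ · ω) (X · ω) (Y · ω) n)
    (hv' : v' ∈ tips (Θ · ω) (X · ω) (Y · ω) n) : 0 < parentDensity Θ X Y c n v v' ω := by
  have : (1 : ℝ) ≤ L (Θ · ω) (X · ω) (Y · ω) n := by exact_mod_cast one_le_L_of_mem_tips hv
  rw [parentDensity, if_pos ⟨hv, hv'⟩]
  positivity

theorem abs_parentDensity_le (hc : 0 ≤ c) (ω : Ω) : |parentDensity Θ X Y c n v v' ω| ≤ c := by
  unfold parentDensity
  split_ifs with h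
  · have : (1 : ℝ) ≤ L (Θ · ω) (X · ω) (Y · ω) n := by exact_mod_cast one_le_L_of_mem_tips h.1
    rw [abs_of_nonneg (by positivity)]
    exact div_le_self hc (one_le_pow₀ this)
  · simpa using hc

theorem measurable_parentDensity :
    Measurable[sigAlg Θ ε X Y (n - 1)] (parentDensity Θ X Y c n v v') :=
  measurable_sigAlg_of_eqOn Θ ε X Y fun _ _ hΘ _ hX hY => by
    simp only [parentDensity, L, tips_congr hΘ hX hY]

end ParentDensity

section Probability

variable {Ω : Type*} [MeasurableSpace Ω] {μ : Measure Ω} [IsFiniteMeasure μ]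
  {Θ ε X Y : ℕ → Ω → ℕ} {c : ℝ} {hM em κA i : ℕ}
  (hΘ : ∀ k, Measurable (Θ k)) (hε : ∀ k, Measurable (ε k))
  (hX : ∀ k, Measurable (X k)) (hY : ∀ k, Measurable (Y k))

include hΘ hε hX hY in
theorem measure_inter_pos_of_toReal_eq_setIntegral_parentDensity {n v : ℕ} {S P : Set Ω}
    (hc : 0 < c) (hS : MeasurableSet S) (hSpos : μ S ≠ 0)
    (hvS : ∀ ω ∈ S, v ∈ tips (Θ · ω) (X · ω) (Y · ω) n)
    (hlaw : (μ (S ∩ P)).toReal = ∫ ω in S, parentDensity Θ X Y c n v v ω ∂μ) :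
    0 < μ (S ∩ P) := by
  have hmeas : Measurable (parentDensity Θ X Y c n v v) :=
    measurable_parentDensity.mono (sigAlg_le hΘ hε hX hY (n - 1)) le_rfl
  have hint : Integrable (parentDensity Θ X Y c n v v) μ :=
    (integrable_const c).mono' hmeas.aestronglyMeasurable
      (ae_of_all _ fun ω => abs_parentDensity_le hc.le ω)
  exact measure_inter_pos_of_toReal_eq_setIntegral hS hSpos hint.integrableOn
    (fun ω hω => parentDensity_pos hc (hvS ω hω) (hvS ω hω)) hlaw

variable
  (hmodel : ∀ᵐ ω ∂μ, Valid (Θ · ω) (ε · ω) (X · ω) (Y · ω) ∧ ∀ k, 1 ≤ k → em ≤ ε k ω)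
  (hlaw : ∀ n, 1 ≤ n → ∀ v D, MeasurableSet[sigAlg Θ ε X Y (n - 1)] D →
    (μ (D ∩ {ω | Θ n ω = hM ∧ ε n ω = em ∧ X n ω = v ∧ Y n ω = v})).toReal =
      ∫ ω in D, parentDensity Θ X Y c (n - em) v v ω ∂μ)
  (hc : 0 < c) (hhM : 1 ≤ hM) (hκA : 3 * hM + 3 * em + 5 ≤ κA)

include hΘ hε hX hY hmodel hlaw hc hhM hκA in
theorem measure_inter_stepB_add_one_ne_zero {S : Set Ω}
    (hS : MeasurableSet[sigAlg Θ ε X Y (i + κA - 1)] S)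
    (hSA : ∀ ω ∈ S, StepA (Θ · ω) (ε · ω) (X · ω) (Y · ω) hM em κA i) {l : ℕ} (hl : l ≤ em)
    (hpos : μ (S ∩ {ω | StepB (Θ · ω) (ε · ω) (X · ω) (Y · ω) hM em κA (κA + l) i}) ≠ 0) :
    μ (S ∩ {ω | StepB (Θ · ω) (ε · ω) (X · ω) (Y · ω) hM em κA (κA + (l + 1)) i}) ≠ 0 := by
  set j := i + κA + l
  set Sl := S ∩ {ω | StepB (Θ · ω) (ε · ω) (X · ω) (Y · ω) hM em κA (κA + l) i}
  set T := fun v => {ω |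
    v ∈ tips (Θ · ω) (X · ω) (Y · ω) (j - em) \ FB (Θ · ω) (X · ω) (Y · ω) hM em κA i}
  have hSl : MeasurableSet[sigAlg Θ ε X Y (j - 1)] Sl := by
    have hB :=
      measurableSet_stepB Θ ε X Y (hM := hM) (em := em) (κA := κA) (κB := κA + l) (i := i)
    rw [← Nat.add_assoc] at hB
    exact (sigAlg_mono Θ ε X Y (by omega) _ hS).inter hB
  obtain ⟨v, hv⟩ := exists_measure_inter_ne_zero_of_ae_cover (T := T) hpos
    (hmodel.mono fun ω ⟨hval, he⟩ hω =>
      exists_mem_tips_notMem_FB hval he (hSA ω hω.1) hhM hκA (n := j - em) (by omega)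
        (by omega))
  have hSv : MeasurableSet[sigAlg Θ ε X Y (j - 1)] (Sl ∩ T v) :=
    hSl.inter (measurableSet_mem_tips_diff_FB Θ ε X Y (Nat.sub_le j em) (by omega))
  have hpick := measure_inter_pos_of_toReal_eq_setIntegral_parentDensity hΘ hε hX hY hc
    (sigAlg_le hΘ hε hX hY _ _ hSv) hv (fun ω hω => hω.2.1) (hlaw j (by omega) v _ hSv)
  refine (hpick.trans_le (measure_mono ?_)).ne'
  rintro ω ⟨⟨⟨hωS, hωB⟩, hωv⟩, hΘj, hεj, hXj, hYj⟩
  exact ⟨hωS, stepB_add_one hωB ⟨hΘj, hεj, hXj.trans hYj.symm, hXj ▸ hωv⟩⟩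

include hΘ hε hX hY hmodel hlaw hc hhM hκA in
theorem measure_inter_stepB_ne_zero {S : Set Ω}
    (hS : MeasurableSet[sigAlg Θ ε X Y (i + κA - 1)] S)
    (hSA : ∀ ω ∈ S, StepA (Θ · ω) (ε · ω) (X · ω) (Y · ω) hM em κA i) (hSpos : μ S ≠ 0) :
    ∀ l ≤ em + 1,
      μ (S ∩ {ω | StepB (Θ · ω) (ε · ω) (X · ω) (Y · ω) hM em κA (κA + l) i}) ≠ 0 := by
  intro l hl
  induction l with
  | zero =>
    have hB0 : {ω | StepB (Θ · ω) (ε · ω) (X · ω) (Y · ω) hM em κA (κA + 0) i} = Set.univ :=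
      Set.eq_univ_of_forall fun _ j _ hj hj' => absurd hj' (by omega)
    rwa [hB0, Set.inter_univ]
  | succ l ih =>
    exact measure_inter_stepB_add_one_ne_zero hΘ hε hX hY hmodel hlaw hc hhM hκA hS hSA
      (by omega) (ih (by omega))

end Probability

theorem three_mul_add_five_le_of_lt {hM em κA : ℕ} (hhM : 1 < hM)
    (hκA : 1 + max (2 * (hM : ℝ)) (3 * (hM : ℝ) * ((hM : ℝ) + (em : ℝ)) / ((hM : ℝ) - 1))
      < (κA : ℝ)) :
    3 * hM + 3 * em + 5 ≤ κA := by
  have hhM' : (1 : ℝ) < hM := by exact_mod_cast hhM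
  have hdiv :
      3 * (hM : ℝ) + 3 * em + 3 ≤ 3 * (hM : ℝ) * ((hM : ℝ) + (em : ℝ)) / ((hM : ℝ) - 1) := by
    rw [le_div_iff₀ (by linarith)]
    nlinarith [(Nat.cast_nonneg em : (0 : ℝ) ≤ em)]
  have : ((3 * hM + 3 * em + 4 : ℕ) : ℝ) < κA := by
    push_cast
    linarith [le_max_right (2 * (hM : ℝ)) (3 * (hM : ℝ) * ((hM : ℝ) + (em : ℝ)) / ((hM : ℝ) - 1))]
  exact_mod_cast this

end IotaDAG

theorem stepB_positive_probability_general
    {Ω : Type*} {mΩ : MeasurableSpace Ω}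
    (μ : MeasureTheory.Measure Ω) [MeasureTheory.IsProbabilityMeasure μ]
    (M : ℕ) (hM2 : 2 ≤ M)
    (h : ℕ → ℕ)
    (Iε : Finset ℕ) (hIε : Iε.Nonempty)
    (pΘ pε : ℕ → ℝ)
    (hpΘ : ∀ k ∈ Finset.Icc 1 M, 0 < pΘ k)
    (hpε : ∀ j ∈ Iε, 0 < pε j)
    (Θ ε X Y : ℕ → Ω → ℕ)
    (hΘm : ∀ n, Measurable (Θ n)) (hεm : ∀ n, Measurable (ε n))
    (hXm : ∀ n, Measurable (X n)) (hYm : ∀ n, Measurable (Y n))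
    -- almost surely the realization is a valid trajectory of the model
    (hmodel : ∀ᵐ ω ∂μ,
      (∀ n, 1 ≤ n → (∃ k, 1 ≤ k ∧ k ≤ M ∧ Θ n ω = h k) ∧ ε n ω ∈ Iε) ∧
      Valid (fun m => Θ m ω) (fun m => ε m ω) (fun m => X m ω) (fun m => Y m ω))
    -- the conditional law of `(Θ_n, ε_n, X_n, Y_n)` given `Σ_{n-1}`:
    -- parents are uniform with replacement on the delayed set of tips
    (hlaw : ∀ n, 1 ≤ n → ∀ k ∈ Finset.Icc 1 M, ∀ j ∈ Iε, ∀ v v' : ℕ,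
      ∀ D : Set Ω, MeasurableSet[sigAlg Θ ε X Y (n - 1)] D →
        (μ (D ∩ {ω | Θ n ω = h k ∧ ε n ω = j ∧ X n ω = v ∧ Y n ω = v'})).toReal
          = ∫ ω in D,
              (if v ∈ tips (fun m => Θ m ω) (fun m => X m ω) (fun m => Y m ω) (n - j) ∧
                  v' ∈ tips (fun m => Θ m ω) (fun m => X m ω) (fun m => Y m ω) (n - j)
                then pΘ k * pε j /
                  (L (fun m => Θ m ω) (fun m => X m ω) (fun m => Y m ω) (n - j) : ℝ) ^ 2
                else 0) ∂μ)
    (κA κB : ℕ)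
    (hκA : 1 + max (2 * (h M : ℝ))
        (3 * (h M : ℝ) * ((h M : ℝ) + (Iε.min' hIε : ℝ)) / ((h M : ℝ) - 1)) < (κA : ℝ))
    (hκB : κB = κA + Iε.min' hIε + 1)
    (hhM : 1 < h M)
    (i : ℕ) (D : Set Ω)
    (hD : MeasurableSet[sigAlg Θ ε X Y (i - 1)] D)
    (hDApos : 0 < μ (D ∩ {ω | StepA (fun m => Θ m ω) (fun m => ε m ω) (fun m => X m ω)
      (fun m => Y m ω) (h M) (Iε.min' hIε) κA i})) :
    0 < μ[|D ∩ {ω | StepA (fun m => Θ m ω) (fun m => ε m ω) (fun m => X m ω)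
        (fun m => Y m ω) (h M) (Iε.min' hIε) κA i}]
      {ω | StepB (fun m => Θ m ω) (fun m => ε m ω) (fun m => X m ω)
        (fun m => Y m ω) (h M) (Iε.min' hIε) κA κB i} := by
  set em := Iε.min' hIε
  have hM : M ∈ Finset.Icc 1 M := Finset.mem_Icc.2 ⟨by omega, le_rfl⟩
  have hem : em ∈ Iε := Finset.min'_mem Iε hIε
  have hS : MeasurableSet[sigAlg Θ ε X Y (i + κA - 1)]
      (D ∩ {ω | StepA (Θ · ω) (ε · ω) (X · ω) (Y · ω) (h M) em κA i}) :=
    (sigAlg_mono Θ ε X Y (by omega) _ hD).inter (measurableSet_stepA Θ ε X Y)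
  have hB := measure_inter_stepB_ne_zero hΘm hεm hXm hYm
    (hmodel.mono fun ω hω => ⟨hω.2, fun n hn => Finset.min'_le _ _ (hω.1 n hn).2⟩)
    (fun n hn v D hD => hlaw n hn M hM em hem v v D hD) (mul_pos (hpΘ M hM) (hpε em hem))
    hhM.le (three_mul_add_five_le_of_lt hhM hκA) hS (fun ω hω => hω.2) hDApos.ne' (em + 1) le_rfl
  rw [cond_apply (sigAlg_le hΘm hεm hXm hYm _ _ hS), hκB]
  exact ENNReal.mul_pos (ENNReal.inv_ne_zero.2 (measure_ne_top μ _)) hB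

/-- With `b > 10 h_M - 6 h_1 + 3 M ε_max + 2`,
`κ_A > 1 + max {2 h_M, 3 h_M (h_M + ε_min) / (h_M - 1)}` and `κ_B = κ_A + ε_min + 1`:
for any `i` and any `D ∈ Σ_{i-1}` with `D ⊆ {L(t_i) ≤ b}` and `P(D ∩ A_i) > 0`,
the Step-B event `B_i` has strictly positive conditional probability given `D ∩ A_i`. -/
theorem stepB_positive_probability
    {Ω : Type*} {mΩ : MeasurableSpace Ω}
    (μ : MeasureTheory.Measure Ω) [MeasureTheory.IsProbabilityMeasure μ]
    (M : ℕ) (hM2 : 2 ≤ M)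
    (h : ℕ → ℕ) (hpos : 0 < h 1) (hmono : StrictMonoOn h (Set.Icc 1 M))
    (Iε : Finset ℕ) (hIε : Iε.Nonempty) (hεmin : 0 < Iε.min' hIε)
    (pΘ pε : ℕ → ℝ)
    (hpΘ : ∀ k ∈ Finset.Icc 1 M, 0 < pΘ k) (hpΘsum : ∑ k ∈ Finset.Icc 1 M, pΘ k = 1)
    (hpε : ∀ j ∈ Iε, 0 < pε j) (hpεsum : ∑ j ∈ Iε, pε j = 1)
    (Θ ε X Y : ℕ → Ω → ℕ)
    (hΘm : ∀ n, Measurable (Θ n)) (hεm : ∀ n, Measurable (ε n))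
    (hXm : ∀ n, Measurable (X n)) (hYm : ∀ n, Measurable (Y n))
    -- almost surely the realization is a valid trajectory of the model
    (hmodel : ∀ᵐ ω ∂μ,
      (∀ n, 1 ≤ n → (∃ k, 1 ≤ k ∧ k ≤ M ∧ Θ n ω = h k) ∧ ε n ω ∈ Iε) ∧
      Valid (fun m => Θ m ω) (fun m => ε m ω) (fun m => X m ω) (fun m => Y m ω))
    -- the conditional law of `(Θ_n, ε_n, X_n, Y_n)` given `Σ_{n-1}`:
    -- parents are uniform with replacement on the delayed set of tips
    (hlaw : ∀ n, 1 ≤ n → ∀ k ∈ Finset.Icc 1 M, ∀ j ∈ Iε, ∀ v v' : ℕ,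
      ∀ D : Set Ω, MeasurableSet[sigAlg Θ ε X Y (n - 1)] D →
        (μ (D ∩ {ω | Θ n ω = h k ∧ ε n ω = j ∧ X n ω = v ∧ Y n ω = v'})).toReal
          = ∫ ω in D,
              (if v ∈ tips (fun m => Θ m ω) (fun m => X m ω) (fun m => Y m ω) (n - j) ∧
                  v' ∈ tips (fun m => Θ m ω) (fun m => X m ω) (fun m => Y m ω) (n - j)
                then pΘ k * pε j /
                  (L (fun m => Θ m ω) (fun m => X m ω) (fun m => Y m ω) (n - j) : ℝ) ^ 2
                else 0) ∂μ)
    (b : ℝ)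
    (hb : 10 * (h M : ℝ) - 6 * (h 1 : ℝ) + 3 * M * (Iε.max' hIε : ℝ) + 2 < b)
    (κA κB : ℕ)
    (hκA : 1 + max (2 * (h M : ℝ))
        (3 * (h M : ℝ) * ((h M : ℝ) + (Iε.min' hIε : ℝ)) / ((h M : ℝ) - 1)) < (κA : ℝ))
    (hκB : κB = κA + Iε.min' hIε + 1)
    (hhM : 1 < h M)
    (i : ℕ) (D : Set Ω)
    (hD : MeasurableSet[sigAlg Θ ε X Y (i - 1)] D)
    (hDsub : D ⊆ {ω | (L (fun m => Θ m ω) (fun m => X m ω) (fun m => Y m ω) i : ℝ) ≤ b})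
    (hDApos : 0 < μ (D ∩ {ω | StepA (fun m => Θ m ω) (fun m => ε m ω) (fun m => X m ω)
      (fun m => Y m ω) (h M) (Iε.min' hIε) κA i})) :
    0 < μ[|D ∩ {ω | StepA (fun m => Θ m ω) (fun m => ε m ω) (fun m => X m ω)
        (fun m => Y m ω) (h M) (Iε.min' hIε) κA i}]
      {ω | StepB (fun m => Θ m ω) (fun m => ε m ω) (fun m => X m ω)
        (fun m => Y m ω) (h M) (Iε.min' hIε) κA κB i} :=
  stepB_positive_probability_general (mΩ := mΩ) μ M hM2 h Iε hIε pΘ pε hpΘ hpε Θ ε X Y hΘm hεm hXm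
    hYm hmodel hlaw κA κB hκA hκB hhM i D hD hDApos
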